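/- Let T(u) = ∑_{m≥0} 2·(10m+5)!!/((2m+1)!!)⁵ · u^{2m+1} ∈ ℚ[[u]] and let θ = (1/2)·u·d/du. Then T satisfies the extended Picard–Fuchs equation (2θ−1)θ⁴T = 5u²(2θ+1)(5θ+1)(5θ+2)(5θ+3)(5θ+4)T. -/

import Mathlib

/-- The operator `θ = (1/2)·u·d/du` on formal power series over `ℚ`: `(θ f)ₙ = (n/2)·fₙ`. -/
noncomputable def theta (f : PowerSeries ℚ) : PowerSeries ℚ :=
  PowerSeries.mk fun n => ((n : ℚ) / 2) * PowerSeries.coeff n f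

/-- Walcher's disk potential `T(u) = ∑_{m ≥ 0} 2·(10m+5)!!/((2m+1)!!)⁵ · u^{2m+1}`
(for odd `n = 2m+1` one has `10m+5 = 5n` and `(2m+1)!! = n!!`). -/
noncomputable def T : PowerSeries ℚ :=
  PowerSeries.mk fun n =>
    if n % 2 = 1 then
      2 * (Nat.doubleFactorial (5 * n) : ℚ) / (Nat.doubleFactorial n : ℚ) ^ 5
    else 0

/-- The operator `5θ + a`. -/
noncomputable def A (a : ℚ) (f : PowerSeries ℚ) : PowerSeries ℚ :=
  (5 : ℚ) • theta f + a • f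

/-!
Comparing coefficients of `u^n`, the extended Picard–Fuchs equation reduces to the hypergeometric
recursion `(n+2)⁴ t_{n+2} = 5(5n+2)(5n+4)(5n+6)(5n+8) t_n` multiplied by `(n+1)/16`, while at `u⁰`
and `u¹` it holds because `θ` and `2θ−1` kill those coefficients. The coefficients of `T` satisfy the
recursion by `(5n+10)‼ = (5n+10)(5n+8)(5n+6)(5n+4)(5n+2)·(5n)‼` and `(n+2)‼ = (n+2)·n‼`.
-/

open PowerSeries
open scoped Nat

@[simp]
lemma coeff_theta (n : ℕ) (f : ℚ⟦X⟧) : coeff n (theta f) = (n / 2 : ℚ) * coeff n f :=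
  coeff_mk _ _

@[simp]
lemma coeff_A (a : ℚ) (n : ℕ) (f : ℚ⟦X⟧) : coeff n (A a f) = (5 * (n / 2 : ℚ) + a) * coeff n f := by
  simp only [A, map_add, map_smul, coeff_theta, smul_eq_mul]
  ring

lemma coeff_five_mul_X_sq_mul (n : ℕ) (f : ℚ⟦X⟧) :
    coeff n (5 * X ^ 2 * f) = if 2 ≤ n then 5 * coeff (n - 2) f else 0 := by
  rw [← map_ofNat (C (R := ℚ)) 5, mul_comm (C _), mul_assoc, coeff_X_pow_mul', coeff_C_mul]

theorem extended_picard_fuchs_of_recursion (f : ℚ⟦X⟧)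
    (hf : ∀ n : ℕ, ((n : ℚ) + 2) ^ 4 * coeff (n + 2) f =
      5 * (5 * n + 2) * (5 * n + 4) * (5 * n + 6) * (5 * n + 8) * coeff n f) :
    (2 : ℚ) • theta (theta (theta (theta (theta f)))) - theta (theta (theta (theta f))) =
      5 * X ^ 2 * ((2 : ℚ) • theta (A 1 (A 2 (A 3 (A 4 f)))) + A 1 (A 2 (A 3 (A 4 f)))) := by
  ext n
  simp only [coeff_five_mul_X_sq_mul, map_sub, map_add, map_smul, coeff_theta, coeff_A, smul_eq_mul]
  rcases n with _ | _ | n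
  · simp
  · norm_num
    ring
  · simp only [le_add_iff_nonneg_left, zero_le, if_true]
    push_cast
    linear_combination ((n : ℚ) + 1) / 16 * hf n

lemma Nat.doubleFactorial_add_ten (m : ℕ) :
    (m + 10)‼ = (m + 10) * (m + 8) * (m + 6) * (m + 4) * (m + 2) * m‼ := by
  simp only [Nat.doubleFactorial_add_two]
  ring

lemma coeff_T_recursion (n : ℕ) : ((n : ℚ) + 2) ^ 4 * coeff (n + 2) T =
      5 * (5 * n + 2) * (5 * n + 4) * (5 * n + 6) * (5 * n + 8) * coeff n T := by
  simp only [T, coeff_mk, Nat.add_mod_right]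
  split_ifs
  · rw [show 5 * (n + 2) = 5 * n + 10 by ring, Nat.doubleFactorial_add_ten,
      Nat.doubleFactorial_add_two]
    have : (n‼ : ℚ) ≠ 0 := by positivity
    push_cast
    field_simp
    ring
  · simp

/-- `T` satisfies the extended Picard–Fuchs equation
`(2θ−1)θ⁴T = 5u²(2θ+1)(5θ+1)(5θ+2)(5θ+3)(5θ+4)T`. -/
theorem T_satisfies_extended_picard_fuchs :
    (2 : ℚ) • theta (theta (theta (theta (theta T)))) - theta (theta (theta (theta T))) =
      5 * PowerSeries.X ^ 2 *
        ((2 : ℚ) • theta (A 1 (A 2 (A 3 (A 4 T)))) + A 1 (A 2 (A 3 (A 4 T)))) :=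
  extended_picard_fuchs_of_recursion T coeff_T_recursion
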